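/- For n ≥ 0, ∑_{j=0}^{n} S(n+1, j+1) · c_j = (2^{n+1} - 1)/(n+1), where c_j are the classical Cauchy numbers and S the Stirling numbers of the second kind. -/

import Mathlib

/-!
The Cauchy number `c_j` is `∫₀¹ (t)_j dt`, where `(t)_j = t (t - 1) ⋯ (t - j + 1)` is the
falling factorial: expand `(t)_j` in signed Stirling numbers of the first kind and integrate
term by term. Hence the sum is `∫₀¹ ∑_j S(n+1, j+1) (t)_j dt`. The recurrence of `S` together
with `(t)_{j+1} = (t)_j (t - j)` shows that the integrand is `(t + 1)^n` (a shifted form of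
`t^n = ∑_k S(n, k) (t)_k`), and `∫₀¹ (t + 1)^n dt = (2^{n+1} - 1)/(n + 1)`.
-/

open Finset

/-- Unsigned Stirling numbers of the first kind. -/
def stirling1 : ℕ → ℕ → ℕ
  | 0, 0 => 1
  | 0, _ + 1 => 0
  | _ + 1, 0 => 0
  | n + 1, k + 1 => n * stirling1 n (k + 1) + stirling1 n k

/-- Stirling numbers of the second kind. -/
def stirling2 : ℕ → ℕ → ℕ
  | 0, 0 => 1
  | 0, _ + 1 => 0
  | _ + 1, 0 => 0
  | n + 1, k + 1 => (k + 1) * stirling2 n (k + 1) + stirling2 n k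

/-- Unsigned r-Stirling numbers of the first kind. -/
def rStirling1 (r : ℕ) : ℕ → ℕ → ℕ
  | 0, m => if r = 0 ∧ m = 0 then 1 else 0
  | n + 1, m =>
    if n + 1 < r then 0
    else if n + 1 = r then (if m = r then 1 else 0)
    else n * rStirling1 r n m + (match m with | 0 => 0 | m' + 1 => rStirling1 r n m')

/-- r-Stirling numbers of the second kind. -/
def rStirling2 (r : ℕ) : ℕ → ℕ → ℕ
  | 0, m => if r = 0 ∧ m = 0 then 1 else 0
  | n + 1, m =>
    if n + 1 < r then 0
    else if n + 1 = r then (if m = r then 1 else 0)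
    else m * rStirling2 r n m + (match m with | 0 => 0 | m' + 1 => rStirling2 r n m')

/-- Poly-Cauchy numbers of the first kind `c_n^{(k)}`. -/
noncomputable def polyCauchy (k : ℤ) (n : ℕ) : ℝ :=
  ∑ ℓ ∈ range (n + 1), (-1 : ℝ) ^ (n - ℓ) * stirling1 n ℓ / ((ℓ : ℝ) + 1) ^ k

/-- Poly-Cauchy numbers of the second kind `ĉ_n^{(k)}`. -/
noncomputable def polyCauchy2 (k : ℤ) (n : ℕ) : ℝ :=
  (-1 : ℝ) ^ n * ∑ ℓ ∈ range (n + 1), (stirling1 n ℓ : ℝ) / ((ℓ : ℝ) + 1) ^ k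

/-- Poly-Cauchy polynomials of the first kind `c_n^{(k)}(z)`. -/
noncomputable def polyCauchyPoly (k : ℤ) (n : ℕ) (z : ℝ) : ℝ :=
  ∑ m ∈ range (n + 1), (stirling1 n m : ℝ) * (-1 : ℝ) ^ (n - m) *
    ∑ i ∈ range (m + 1), (m.choose i : ℝ) * z ^ (m - i) / ((i : ℝ) + 1) ^ k

/-- Shifted poly-Cauchy numbers of the first kind `c_{n,α}^{(k)}`. -/
noncomputable def shiftedPolyCauchy (k : ℤ) (n : ℕ) (α : ℝ) : ℝ :=
  ∑ m ∈ range (n + 1), (stirling1 n m : ℝ) * (-1 : ℝ) ^ (n - m) / ((m : ℝ) + α) ^ k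

/-- Shifted poly-Cauchy numbers of the second kind `ĉ_{n,α}^{(k)}`. -/
noncomputable def shiftedPolyCauchy2 (k : ℤ) (n : ℕ) (α : ℝ) : ℝ :=
  (-1 : ℝ) ^ n * ∑ m ∈ range (n + 1), (stirling1 n m : ℝ) / ((m : ℝ) + α) ^ k

open Polynomial Nat

lemma stirling1_eq_stirlingFirst : stirling1 = Nat.stirlingFirst := by
  funext n k
  induction n generalizing k with
  | zero => cases k <;> rfl
  | succ n ih => cases k <;> simp [stirling1, Nat.stirlingFirst, ih]

lemma stirling2_eq_stirlingSecond : stirling2 = Nat.stirlingSecond := by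
  funext n k
  induction n generalizing k with
  | zero => cases k <;> rfl
  | succ n ih => cases k <;> simp [stirling2, Nat.stirlingSecond, ih]

theorem ascPochhammer_eval_eq_sum_stirlingFirst {R : Type*} [CommSemiring R] (n : ℕ) (r : R) :
    (ascPochhammer R n).eval r = ∑ k ∈ range (n + 1), (stirlingFirst n k : R) * r ^ k := by
  induction n with
  | zero => simp
  | succ n ih =>
    rw [ascPochhammer_succ_eval, ih]
    have shift : ∑ k ∈ range (n + 1), (n * stirlingFirst n (k + 1) : R) * r ^ (k + 1) =
        ∑ k ∈ range (n + 1), (n * stirlingFirst n k : R) * r ^ k := by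
      -- both sides are the sum over `k < n + 2`: the terms `n * s(n, 0)` and `s(n, n + 1)` vanish
      have h₁ := sum_range_succ' (fun k => (n * stirlingFirst n k : R) * r ^ k) (n + 1)
      have h₂ := sum_range_succ (fun k => (n * stirlingFirst n k : R) * r ^ k) (n + 1)
      rcases n with _ | n
      · simp
      · simp_all [stirlingFirst_eq_zero_of_lt]
    calc (∑ k ∈ range (n + 1), (stirlingFirst n k : R) * r ^ k) * (r + n)
        = ∑ k ∈ range (n + 1), ((stirlingFirst n k : R) * r ^ (k + 1) +
            (n * stirlingFirst n k : R) * r ^ k) := by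
          rw [sum_mul]; exact sum_congr rfl fun k _ => by ring
      _ = ∑ k ∈ range (n + 1), (stirlingFirst (n + 1) (k + 1) : R) * r ^ (k + 1) := by
          rw [sum_add_distrib, ← shift, ← sum_add_distrib]
          exact sum_congr rfl fun k _ => by push_cast [stirlingFirst_succ_succ]; ring
      _ = ∑ k ∈ range (n + 2), (stirlingFirst (n + 1) k : R) * r ^ k := by
          simp [sum_range_succ' _ (n + 1)]

theorem descPochhammer_eval_eq_sum_stirlingFirst {R : Type*} [CommRing R] (n : ℕ) (r : R) :
    (descPochhammer R n).eval r =
      ∑ k ∈ range (n + 1), (-1) ^ (n - k) * (stirlingFirst n k : R) * r ^ k := by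
  have sq (m : ℕ) : (-1 : R) ^ m * (-1) ^ m = 1 := by rw [← mul_pow]; simp
  have h := ascPochhammer_eval_neg_eq_descPochhammer R r n
  rw [ascPochhammer_eval_eq_sum_stirlingFirst] at h
  calc (descPochhammer R n).eval r = (-1) ^ n * ((-1) ^ n * (descPochhammer R n).eval r) := by
        rw [← mul_assoc, sq, one_mul]
    _ = _ := by
        rw [← h, mul_sum]
        refine sum_congr rfl fun k hk => ?_
        obtain ⟨m, rfl⟩ := Nat.exists_eq_add_of_le (Nat.le_of_lt_succ (mem_range.mp hk))
        rw [neg_pow, add_tsub_cancel_left, pow_add]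
        linear_combination (stirlingFirst (k + m) k : R) * r ^ k * (-1) ^ m * sq k

theorem sum_stirlingSecond_succ_mul_descPochhammer_eval {R : Type*} [CommRing R] (n : ℕ) (r : R) :
    ∑ k ∈ range (n + 1), (stirlingSecond (n + 1) (k + 1) : R) * (descPochhammer R k).eval r =
      (r + 1) ^ n := by
  induction n with
  | zero => simp [stirlingSecond_self]
  | succ n ih =>
    have low : ∑ k ∈ range (n + 2),
        ((k + 1) * stirlingSecond (n + 1) (k + 1) : R) * (descPochhammer R k).eval r =
          ∑ k ∈ range (n + 1),
            ((k + 1) * stirlingSecond (n + 1) (k + 1) : R) * (descPochhammer R k).eval r := by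
      simp [sum_range_succ _ (n + 1), stirlingSecond_eq_zero_of_lt]
    have high :
        ∑ k ∈ range (n + 2), (stirlingSecond (n + 1) k : R) * (descPochhammer R k).eval r =
        ∑ k ∈ range (n + 1),
          (stirlingSecond (n + 1) (k + 1) : R) * ((descPochhammer R k).eval r * (r - k)) := by
      simp [sum_range_succ' _ (n + 1), descPochhammer_succ_eval]
    calc ∑ k ∈ range (n + 2),
          (stirlingSecond (n + 2) (k + 1) : R) * (descPochhammer R k).eval r
        = ∑ k ∈ range (n + 2),
            ((k + 1) * stirlingSecond (n + 1) (k + 1) : R) * (descPochhammer R k).eval r +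
          ∑ k ∈ range (n + 2),
            (stirlingSecond (n + 1) k : R) * (descPochhammer R k).eval r := by
          rw [← sum_add_distrib]
          exact sum_congr rfl fun k _ => by push_cast [stirlingSecond_succ_succ]; ring
      _ = (r + 1) * ∑ k ∈ range (n + 1),
            (stirlingSecond (n + 1) (k + 1) : R) * (descPochhammer R k).eval r := by
          rw [low, high, ← sum_add_distrib, mul_sum]
          exact sum_congr rfl fun k _ => by ring
      _ = (r + 1) ^ (n + 1) := by rw [ih]; ring

theorem polyCauchy_one_eq_integral (n : ℕ) :
    polyCauchy 1 n = ∫ t in (0 : ℝ)..1, (descPochhammer ℝ n).eval t := by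
  simp only [descPochhammer_eval_eq_sum_stirlingFirst]
  rw [intervalIntegral.integral_finsetSum fun k _ =>
    (by fun_prop : Continuous fun t : ℝ => (-1) ^ (n - k) * (stirlingFirst n k : ℝ) * t ^ k)
      |>.intervalIntegrable 0 1]
  refine sum_congr rfl fun k _ => ?_
  rw [intervalIntegral.integral_const_mul, integral_pow, stirling1_eq_stirlingFirst]
  simp [div_eq_mul_inv]

theorem stmt5 (n : ℕ) :
    ∑ j ∈ Finset.range (n + 1), (stirling2 (n + 1) (j + 1) : ℝ) * polyCauchy 1 j =
      (2 ^ (n + 1) - 1) / ((n : ℝ) + 1) := by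
  have integrable (j : ℕ) : IntervalIntegrable
      (fun t => (stirling2 (n + 1) (j + 1) : ℝ) * (descPochhammer ℝ j).eval t)
      MeasureTheory.volume 0 1 :=
    (continuous_const.mul (descPochhammer ℝ j).continuous).intervalIntegrable 0 1
  calc ∑ j ∈ range (n + 1), (stirling2 (n + 1) (j + 1) : ℝ) * polyCauchy 1 j
      = ∫ t in (0 : ℝ)..1, ∑ j ∈ range (n + 1),
          (stirling2 (n + 1) (j + 1) : ℝ) * (descPochhammer ℝ j).eval t := by
        rw [intervalIntegral.integral_finsetSum fun j _ => integrable j]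
        simp only [polyCauchy_one_eq_integral, intervalIntegral.integral_const_mul]
    _ = ∫ t in (0 : ℝ)..1, (t + 1) ^ n := by
        simp only [stirling2_eq_stirlingSecond, sum_stirlingSecond_succ_mul_descPochhammer_eval]
    _ = (2 ^ (n + 1) - 1) / ((n : ℝ) + 1) := by
        rw [intervalIntegral.integral_comp_add_right (fun t => t ^ n), integral_pow]
        norm_num
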